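/- Fix l ≥ 2, 1 ≤ h ≤ l − 1, and a correct key k* : Fin l → Bool. Then for every key k with HD(k*,k) = 2, the number of l-bit words i such that exactly one of HD(i,k*) = h and HD(i,k) = h holds equals 2·(C(l,h) − 2·C(l−2,h−1)); consequently the minimum, over all incorrect keys k ≠ k*, of the per-key error count is at most 2·(C(l,h) − 2·C(l−2,h−1)). -/

import Mathlib

/-!
Recording a word by the set of coordinates where it differs from `k*` identifies words with
subsets of `Fin l` and Hamming distance with the size of a symmetric difference. The spheres of
radius `h` around `k*` and around `k` become the `h`-sets `S` and the sets with `#(S ∆ D) = h`,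
where `D` is the 2-set on which `k` and `k*` differ. Both spheres have `C(l,h)` points, and an
`h`-set lies on the second one iff it meets `D` in exactly one point, which happens for
`2·C(l-2,h-1)` of them. The erroneous inputs form the symmetric difference of the two spheres.
-/

/-- Hamming distance between `l`-bit words. -/
def HD {l : ℕ} (a b : Fin l → Bool) : ℕ :=
  (Finset.univ.filter (fun j => a j ≠ b j)).card

open Finset
open scoped symmDiff

namespace Finset

variable {α : Type*} [DecidableEq α]

theorem card_symmDiff_add_two_mul_card_inter (s t : Finset α) :
    #(s ∆ t) + 2 * #(s ∩ t) = #s + #t := by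
  have hsub : s ∩ t ⊆ s ∪ t := inter_subset_left.trans subset_union_left
  rw [symmDiff_eq_sup_sdiff_inf, sup_eq_union, inf_eq_inter, card_sdiff_of_subset hsub,
    ← card_union_add_card_inter]
  have := card_le_card hsub
  omega

theorem card_filter_xor_add_two_mul_card_filter_and (s : Finset α) (p q : α → Prop)
    [DecidablePred p] [DecidablePred q] :
    #{x ∈ s | Xor (p x) (q x)} + 2 * #{x ∈ s | p x ∧ q x} = #{x ∈ s | p x} + #{x ∈ s | q x} := by
  rw [← card_symmDiff_add_two_mul_card_inter, filter_and]
  congr 2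
  ext x
  simp only [mem_filter, mem_symmDiff]
  unfold Xor
  tauto

theorem card_filter_powersetCard_card_inter_eq {U T : Finset α} (hTU : T ⊆ U) {n j : ℕ}
    (hjn : j ≤ n) :
    #{S ∈ U.powersetCard n | #(S ∩ T) = j} = (#T).choose j * (#U - #T).choose (n - j) := by
  have split_union {A B : Finset α} (hAT : A ⊆ T) (hBT : Disjoint B T) :
      (A ∪ B) ∩ T = A ∧ (A ∪ B) \ T = B := by
    rw [union_inter_distrib_right, inter_eq_left.mpr hAT, disjoint_iff_inter_eq_empty.mp hBT,
      union_empty, union_sdiff_distrib, sdiff_eq_empty_iff_subset.mpr hAT, empty_union,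
      sdiff_eq_self_of_disjoint hBT]
    exact ⟨rfl, rfl⟩
  rw [← card_sdiff_of_subset hTU, ← card_powersetCard, ← card_powersetCard, ← card_product]
  refine card_nbij' (fun S => (S ∩ T, S \ T)) (fun p => p.1 ∪ p.2) ?_ ?_ ?_ ?_
  · rintro S hS
    simp only [coe_filter, mem_powersetCard, Set.mem_ofPred_eq] at hS
    obtain ⟨⟨hSU, hSn⟩, hST⟩ := hS
    have := card_sdiff_add_card_inter S T
    simp only [coe_product, Set.mem_prod, mem_coe, mem_powersetCard]
    exact ⟨⟨inter_subset_right, hST⟩, sdiff_subset_sdiff hSU subset_rfl, by omega⟩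
  · rintro ⟨A, B⟩ hAB
    simp only [coe_product, Set.mem_prod, mem_coe, mem_powersetCard, subset_sdiff] at hAB
    obtain ⟨⟨hAT, hA⟩, ⟨hBU, hBT⟩, hB⟩ := hAB
    have hAB : Disjoint A B := disjoint_of_subset_left hAT hBT.symm
    simp only [coe_filter, mem_powersetCard, Set.mem_ofPred_eq, (split_union hAT hBT).1,
      card_union_of_disjoint hAB]
    exact ⟨⟨union_subset (hAT.trans hTU) hBU, by omega⟩, hA⟩
  · intro S _
    exact (union_comm _ _).trans (sdiff_union_inter S T)
  · rintro ⟨A, B⟩ hAB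
    simp only [coe_product, Set.mem_prod, mem_coe, mem_powersetCard, subset_sdiff] at hAB
    obtain ⟨⟨hAT, -⟩, ⟨-, hBT⟩, -⟩ := hAB
    exact Prod.ext (split_union hAT hBT).1 (split_union hAT hBT).2

end Finset

variable {ι : Type*} [Fintype ι] [DecidableEq ι]

def diffSetEquiv (c : ι → Bool) : (ι → Bool) ≃ Finset ι where
  toFun a := {j | a j ≠ c j}
  invFun S j := if j ∈ S then !c j else c j
  left_inv a := by
    funext j
    cases ha : a j <;> cases hc : c j <;> simp [ha, hc]
  right_inv S := by
    ext j
    by_cases hj : j ∈ S <;> simp [hj]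

theorem diffSetEquiv_symmDiff (c a b : ι → Bool) :
    diffSetEquiv c a ∆ diffSetEquiv c b = ({j | a j ≠ b j} : Finset ι) := by
  ext j
  simp only [diffSetEquiv, Equiv.coe_fn_mk, mem_symmDiff, mem_filter, mem_univ, true_and]
  cases a j <;> cases b j <;> cases c j <;> simp

variable {l : ℕ}

theorem HD_eq_card_diffSetEquiv (c a : Fin l → Bool) : HD a c = #(diffSetEquiv c a) := rfl

theorem HD_eq_card_symmDiff (c a b : Fin l → Bool) :
    HD a b = #(diffSetEquiv c a ∆ diffSetEquiv c b) := by
  rw [diffSetEquiv_symmDiff]; rfl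

theorem HD_comm (a b : Fin l → Bool) : HD a b = HD b a := hammingDist_comm a b

theorem card_filter_HD_eq (c : Fin l → Bool) (h : ℕ) : #{a | HD a c = h} = l.choose h := by
  have : #(powersetCard h (univ : Finset (Fin l))) = l.choose h := by simp
  rw [← this]
  exact card_equiv (diffSetEquiv c) fun a => by simp [HD_eq_card_diffSetEquiv c a]

theorem card_filter_HD_eq_and_HD_eq {c k : Fin l → Bool} (hk : HD c k = 2) {h : ℕ} (hh : 1 ≤ h) :
    #{a | HD a c = h ∧ HD a k = h} = 2 * (l - 2).choose (h - 1) := by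
  set D := diffSetEquiv c k
  have hD : #D = 2 := (HD_comm k c).trans hk
  have key : ∀ S : Finset (Fin l), #S = h → (#(S ∆ D) = h ↔ #(S ∩ D) = 1) := by
    intro S hS
    have := card_symmDiff_add_two_mul_card_inter S D
    omega
  calc #{a | HD a c = h ∧ HD a k = h}
      = #{S ∈ univ.powersetCard h | #(S ∩ D) = 1} := by
        refine card_equiv (diffSetEquiv c) fun a => ?_
        simp only [mem_filter, mem_univ, true_and, mem_powersetCard, subset_univ,
          HD_eq_card_symmDiff c a k, HD_eq_card_diffSetEquiv c a]
        exact and_congr_right (key _)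
    _ = 2 * (l - 2).choose (h - 1) := by
        rw [card_filter_powersetCard_card_inter_eq (subset_univ D) hh, hD, card_univ,
          Fintype.card_fin, Nat.choose_one_right]

theorem exists_HD_eq_two (hl : 2 ≤ l) (c : Fin l → Bool) : ∃ k, HD c k = 2 := by
  obtain ⟨D, -, hD⟩ := exists_subset_card_eq (s := (univ : Finset (Fin l))) (by simpa using hl)
  refine ⟨(diffSetEquiv c).symm D, ?_⟩
  rw [HD_comm, HD_eq_card_diffSetEquiv, Equiv.apply_symm_apply, hD]

theorem sfll_hd_min_error_upper_bound_general {l : ℕ} (hl : 2 ≤ l) (h : ℕ)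
    (hh1 : 1 ≤ h) (kstar : Fin l → Bool) :
    (∀ k : Fin l → Bool, HD kstar k = 2 →
      (Finset.univ.filter (fun i : Fin l → Bool =>
        Xor (HD i kstar = h) (HD i k = h))).card
        = 2 * (l.choose h - 2 * (l - 2).choose (h - 1))) ∧
    sInf {c : ℕ | ∃ k : Fin l → Bool, k ≠ kstar ∧
        c = (Finset.univ.filter (fun i : Fin l → Bool =>
          Xor (HD i kstar = h) (HD i k = h))).card}
      ≤ 2 * (l.choose h - 2 * (l - 2).choose (h - 1)) := by
  have error_count (k : Fin l → Bool) (hk : HD kstar k = 2) :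
      #{i | Xor (HD i kstar = h) (HD i k = h)} = 2 * (l.choose h - 2 * (l - 2).choose (h - 1)) := by
    have hxor := card_filter_xor_add_two_mul_card_filter_and univ
      (fun i => HD i kstar = h) (fun i => HD i k = h)
    rw [card_filter_HD_eq, card_filter_HD_eq, card_filter_HD_eq_and_HD_eq hk hh1] at hxor
    omega
  refine ⟨error_count, ?_⟩
  obtain ⟨k, hk⟩ := exists_HD_eq_two hl kstar
  have hk_ne : k ≠ kstar := fun hkk => by simp [hkk, HD] at hk
  rw [← error_count k hk]
  exact Nat.sInf_le ⟨k, hk_ne, rfl⟩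

/-- SFLL-HD: every key `k` at Hamming distance `2` from `k*` errs on exactly
`2·(C(l,h) − 2·C(l−2,h−1))` inputs; hence the minimum per-key error count over
incorrect keys is at most this value. -/
theorem sfll_hd_min_error_upper_bound {l : ℕ} (hl : 2 ≤ l) (h : ℕ)
    (hh1 : 1 ≤ h) (hh2 : h ≤ l - 1) (kstar : Fin l → Bool) :
    (∀ k : Fin l → Bool, HD kstar k = 2 →
      (Finset.univ.filter (fun i : Fin l → Bool =>
        Xor (HD i kstar = h) (HD i k = h))).card
        = 2 * (l.choose h - 2 * (l - 2).choose (h - 1))) ∧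
    sInf {c : ℕ | ∃ k : Fin l → Bool, k ≠ kstar ∧
        c = (Finset.univ.filter (fun i : Fin l → Bool =>
          Xor (HD i kstar = h) (HD i k = h))).card}
      ≤ 2 * (l.choose h - 2 * (l - 2).choose (h - 1)) :=
  sfll_hd_min_error_upper_bound_general hl h hh1 kstar
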